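/- Let c > 0, λ_b > 0, λ_d ≥ 0, θ ≥ 0 and P_a ∈ [0,1] be real numbers, let C ≥ 1 be a natural number, set κ = λ_d/(λ_b C), and define p(n) = λ_dⁿ (λ_b c)^c Γ(n+c) / ((λ_d + λ_b c)^(n+c) Γ(n+1) Γ(c)) for natural numbers n, where Γ is the real Gamma function. Then Σ_{n=0}^∞ p(n) · (1 − (P_a/C)·θ/(1+θ))ⁿ = (1 + θ·P_a·κ/((1+θ)·c))^(−c). (This is the closed-form denominator of the offloading success probability in Theorem 1 of the paper, obtained from equation (6).) -/

import Mathlib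

/-!
The number of devices per cell is negative binomial with shape `c` and success probability
`q = λ_b c / (λ_d + λ_b c)`, and the sum is its probability generating function evaluated at
`z = 1 - (P_a / C) θ / (1 + θ)`. That generating function is `(q / (1 - (1 - q) z)) ^ c` by the
binomial series `(1 - t) ^ (-c) = ∑ Γ(n + c) / (Γ(n + 1) Γ(c)) tⁿ`, and
`1 - (1 - q) z = q (1 + θ P_a κ / ((1 + θ) c))`.
-/

open Real

theorem Real.Gamma_add_nat_eq_ascPochhammer_mul {c : ℝ} (hc : ∀ m : ℕ, c ≠ -m) (n : ℕ) :
    Gamma (c + n) = (ascPochhammer ℝ n).eval c * Gamma c := by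
  induction n with
  | zero => simp
  | succ n ih =>
    have hcn : c + n ≠ 0 := fun h ↦ hc n (by linarith)
    rw [Nat.cast_succ, ← add_assoc, Gamma_add_one hcn, ih, ascPochhammer_succ_right,
      Polynomial.eval_mul, Polynomial.eval_add, Polynomial.eval_X, Polynomial.eval_natCast]
    ring

theorem Real.choose_add_nat_sub_one_eq_Gamma_div {c : ℝ} (hc : ∀ m : ℕ, c ≠ -m) (n : ℕ) :
    Ring.choose (c + n - 1) n = Gamma (n + c) / (Gamma (n + 1) * Gamma c) := by
  have hfact : (n.factorial : ℝ) ≠ 0 := by positivity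
  rw [← Ring.multichoose_eq, add_comm (n : ℝ), Gamma_add_nat_eq_ascPochhammer_mul hc,
    Gamma_nat_eq_factorial, ← Polynomial.ascPochhammer_smeval_eq_eval,
    ← Ring.factorial_nsmul_multichoose_eq_ascPochhammer, nsmul_eq_mul]
  field_simp [Gamma_ne_zero hc]

theorem Real.hasSum_Gamma_div_mul_pow {c t : ℝ} (hc : ∀ m : ℕ, c ≠ -m) (ht : |t| < 1) :
    HasSum (fun n : ℕ ↦ Gamma (n + c) / (Gamma (n + 1) * Gamma c) * t ^ n) ((1 - t) ^ (-c)) := by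
  have hball : t ∈ Metric.eball (0 : ℝ) 1 := by
    simpa [Metric.mem_eball, edist_dist] using ht
  have := (one_div_one_sub_rpow_hasFPowerSeriesOnBall_zero c).hasSum hball
  simp only [FormalMultilinearSeries.ofScalars_apply_eq, smul_eq_mul, zero_add] at this
  rw [rpow_neg (by linarith [le_abs_self t]), inv_eq_one_div]
  simpa only [choose_add_nat_sub_one_eq_Gamma_div hc] using this

noncomputable def negBinomialPMF (c q : ℝ) (n : ℕ) : ℝ :=
  Gamma (n + c) / (Gamma (n + 1) * Gamma c) * q ^ c * (1 - q) ^ n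

theorem hasSum_negBinomialPMF_mul_pow {c q z : ℝ} (hc : ∀ m : ℕ, c ≠ -m) (hq : 0 ≤ q)
    (hz : |(1 - q) * z| < 1) :
    HasSum (fun n ↦ negBinomialPMF c q n * z ^ n) ((q / (1 - (1 - q) * z)) ^ c) := by
  have hden : 0 ≤ 1 - (1 - q) * z := by linarith [le_abs_self ((1 - q) * z)]
  rw [div_rpow hq hden, div_eq_mul_inv, ← rpow_neg hden]
  have hterm (n : ℕ) : negBinomialPMF c q n * z ^ n =
      q ^ c * (Gamma (n + c) / (Gamma (n + 1) * Gamma c) * ((1 - q) * z) ^ n) := by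
    rw [negBinomialPMF, mul_pow]
    ring
  simpa only [hterm] using (hasSum_Gamma_div_mul_pow hc hz).mul_left (q ^ c)

theorem hasSum_negBinomialPMF_mul_pow_of_abs_le_one {c q z : ℝ} (hc : ∀ m : ℕ, c ≠ -m)
    (hq0 : 0 < q) (hq1 : q ≤ 1) (hz : |z| ≤ 1) :
    HasSum (fun n ↦ negBinomialPMF c q n * z ^ n) ((q / (1 - (1 - q) * z)) ^ c) := by
  refine hasSum_negBinomialPMF_mul_pow hc hq0.le ?_
  rw [abs_mul, abs_of_nonneg (sub_nonneg.2 hq1)]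
  exact mul_lt_one_of_nonneg_of_lt_one_left (by linarith) (by linarith) hz

theorem negBinomialPMF_div_add {a b : ℝ} (c : ℝ) (ha : 0 ≤ a) (hab : 0 < b + a) (n : ℕ) :
    negBinomialPMF c (a / (b + a)) n =
      b ^ n * a ^ c * Gamma (n + c) / ((b + a) ^ ((n : ℝ) + c) * Gamma (n + 1) * Gamma c) := by
  have hq : 1 - a / (b + a) = b / (b + a) := by field_simp; ring
  rw [negBinomialPMF, hq, div_rpow ha hab.le, div_pow, rpow_add hab, rpow_natCast]
  ring

/-- Closed form of the intra-cell interference Laplace transform factor of Theorem 1: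
averaging the per-device factor `(1 − (P_a/C)·θ/(1+θ))ⁿ` over the PMF of the number of
devices per cell yields `(1 + θ·P_a·κ/((1+θ)·c))^(−c)` with `κ = λ_d/(λ_b C)`. -/
theorem osp_denominator (c lb ld θ Pa κ : ℝ) (C : ℕ) (hc : 0 < c) (hlb : 0 < lb)
    (hld : 0 ≤ ld) (hθ : 0 ≤ θ) (hPa0 : 0 ≤ Pa) (hPa1 : Pa ≤ 1) (hC : 1 ≤ C)
    (hκ : κ = ld / (lb * C)) :
    ∑' n : ℕ, (ld ^ n * (lb * c) ^ c * Real.Gamma (n + c) /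
        ((ld + lb * c) ^ ((n : ℝ) + c) * Real.Gamma (n + 1) * Real.Gamma c)) *
        (1 - (Pa / C) * θ / (1 + θ)) ^ n
      = (1 + θ * Pa * κ / ((1 + θ) * c)) ^ (-c) := by
  have ha : 0 < lb * c := mul_pos hlb hc
  have hA : 0 < ld + lb * c := by linarith
  set q := lb * c / (ld + lb * c) with hq
  set ε := Pa / C * θ / (1 + θ) with hε
  have hq0 : 0 < q := div_pos ha hA
  have hq1 : q ≤ 1 := div_le_one_of_le₀ (by linarith) hA.le
  have hε1 : ε ≤ 1 := by
    have hC' : (1 : ℝ) ≤ C := by exact_mod_cast hC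
    rw [hε, mul_div_assoc]
    exact mul_le_one₀ (div_le_one_of_le₀ (by linarith) (by linarith)) (by positivity)
      (div_le_one_of_le₀ (by linarith) (by linarith))
  have hz : |1 - ε| ≤ 1 := abs_le.2 ⟨by linarith, by linarith [show 0 ≤ ε by positivity]⟩
  have hden : 1 - (1 - q) * (1 - ε) = q * (1 + θ * Pa * κ / ((1 + θ) * c)) := by
    rw [hq, hε, hκ]
    field_simp
    ring
  have hκ0 : 0 ≤ κ := by rw [hκ]; positivity
  have hc' : ∀ m : ℕ, c ≠ -m := fun m ↦ by linarith [m.cast_nonneg (α := ℝ)]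
  simp_rw [← negBinomialPMF_div_add c ha.le hA]
  rw [(hasSum_negBinomialPMF_mul_pow_of_abs_le_one hc' hq0 hq1 hz).tsum_eq, hden,
    div_mul_cancel_left₀ hq0.ne', inv_rpow (by positivity), rpow_neg (by positivity)]
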